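/- arXiv:2410.05199 — 6 statements merged into one kernel-verified Lean document; each statement's English description precedes it below -/
import Mathlib

section
/- Let v_0 F_0 v_1 F_1 ... F_{n-1} v_0 be a closed walk in the d-uniform hypergraph C_d on vertex set Z^d whose hyperedges are the sets {x + r e_1, ..., x + r e_d} for x in Z^d and positive integers r. For each hyperedge F = {x + r e_1, ..., x + r e_d}, define the labelling \lambda_F(x + r e_i) = i. Then the multigraph on vertex set {1, ..., d} with edge multiset { \lambda_{F_i}(v_i) \lambda_{F_i}(v_{i+1}) : 0 \le i < n } is bridgeless. -/
/-- One adjacency step in a multigraph given by endpoint maps `efst, esnd : E → V`,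
using only edges in `S`. -/
def MStep {V E : Type*} (efst esnd : E → V) (S : Set E) (x y : V) : Prop :=
  ∃ e ∈ S, (efst e = x ∧ esnd e = y) ∨ (efst e = y ∧ esnd e = x)

/-- The number of connected components of the multigraph restricted to the edge set `S`. -/
noncomputable def numComponents {V E : Type*} (efst esnd : E → V) (S : Set E) : ℕ :=
  Nat.card (Quotient (Relation.EqvGen.setoid (MStep efst esnd S)))

/-- An edge is a bridge if deleting it increases the number of connected components. -/
def IsBridge {V E : Type*} (efst esnd : E → V) (e : E) : Prop :=
  numComponents efst esnd Set.univ < numComponents efst esnd {e}ᶜ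

/-
A bridge of a multigraph carries no circulation: if `e` is a bridge, the vertex set splits into
a side `S` containing exactly one endpoint of `e`, and every other edge has both endpoints on the
same side, so the net flow out of `S` is `± r e`. The closed walk provides such a circulation on
the projection multigraph, with edge weights the radii: the coordinatewise sum of the steps
`v (i + 1) - v i = r i • (e_{b i} - e_{a i})` telescopes to zero. Since every radius is
positive, no edge can be a bridge.
-/

section Multigraph

variable {V E : Type*} (efst esnd : E → V)

lemma mStep_mono {S T : Set E} (hST : S ⊆ T) : MStep efst esnd S ≤ MStep efst esnd T :=
  fun _ _ ⟨f, hf, hends⟩ => ⟨f, hST hf, hends⟩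

lemma numComponents_compl_singleton_of_eqvGen {e : E}
    (he : Relation.EqvGen (MStep efst esnd {e}ᶜ) (efst e) (esnd e)) :
    numComponents efst esnd {e}ᶜ = numComponents efst esnd Set.univ := by
  have hle : MStep efst esnd Set.univ ≤ Relation.EqvGen (MStep efst esnd {e}ᶜ) := by
    rintro p q ⟨f, -, hends⟩
    by_cases hfe : f = e
    · subst hfe
      rcases hends with ⟨rfl, rfl⟩ | ⟨rfl, rfl⟩
      exacts [he, he.symm]
    · exact .rel _ _ ⟨f, hfe, hends⟩
  have hsetoid : Relation.EqvGen.setoid (MStep efst esnd {e}ᶜ) =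
      Relation.EqvGen.setoid (MStep efst esnd Set.univ) :=
    Setoid.ext fun p q => ⟨Relation.EqvGen.mono (mStep_mono efst esnd (Set.subset_univ _)) p q,
      Relation.EqvGen.eqvGen_le hle p q⟩
  simp only [numComponents, hsetoid]

lemma IsBridge.exists_cut {e : E} (he : IsBridge efst esnd e) :
    ∃ S : Set V, efst e ∈ S ∧ esnd e ∉ S ∧ ∀ f ≠ e, (efst f ∈ S ↔ esnd f ∈ S) := by
  set R := Relation.EqvGen (MStep efst esnd {e}ᶜ)
  refine ⟨{j | R (efst e) j}, .refl _, fun hconn => ?_, fun f hfe => ?_⟩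
  · exact he.ne (numComponents_compl_singleton_of_eqvGen efst esnd hconn).symm
  · have hf : R (efst f) (esnd f) := .rel _ _ ⟨f, hfe, .inl ⟨rfl, rfl⟩⟩
    exact ⟨fun h => h.trans _ _ _ hf, fun h => h.trans _ _ _ hf.symm⟩

lemma IsBridge.eq_zero_of_sum_single_sub_single_eq_zero {M : Type*} [AddCommGroup M]
    [Fintype V] [DecidableEq V] [Fintype E] {e : E} (he : IsBridge efst esnd e) (w : E → M)
    (hflow : ∑ f, (Pi.single (esnd f) (w f) - Pi.single (efst f) (w f) : V → M) = 0) :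
    w e = 0 := by
  classical
  obtain ⟨S, hfstS, hsndS, hcut⟩ := he.exists_cut
  have hnet : ∑ f, ((if esnd f ∈ S then w f else 0) - (if efst f ∈ S then w f else 0)) = 0 := by
    have hS := congrArg (fun g : V → M => ∑ j ∈ S.toFinset, g j) hflow
    simpa only [Finset.sum_apply, Pi.sub_apply, Pi.single_apply, Finset.sum_sub_distrib,
      Finset.sum_comm (s := S.toFinset), Finset.sum_ite_eq', Set.mem_toFinset, Pi.zero_apply,
      Finset.sum_const_zero] using hS
  rw [Finset.sum_eq_single e (fun f _ hfe => by simp only [hcut f hfe, sub_self])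
    (by simp), if_neg hsndS, if_pos hfstS, zero_sub, neg_eq_zero] at hnet
  exact hnet

end Multigraph

lemma Fin.sum_univ_cyclic_sub_eq_zero {G : Type*} [AddCommGroup G] (n : ℕ) (f : ℕ → G) :
    ∑ i : Fin n, (f ((i + 1) % n) - f i) = 0 := by
  rcases n with _ | m
  · simp
  rw [Finset.sum_sub_distrib, sub_eq_zero]
  refine Fintype.sum_equiv (Equiv.addRight 1) _ _ fun i => ?_
  simp [Fin.val_add, Nat.add_mod]

theorem stmt_1_general (d n : ℕ)
    (v x : ℕ → Fin d → ℤ) (r : ℕ → ℤ) (a b : ℕ → Fin d)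
    (hr : ∀ i < n, 0 < r i)
    (hv : ∀ i < n, v i = x i + Pi.single (a i) (r i))
    (hv' : ∀ i < n, v ((i + 1) % n) = x i + Pi.single (b i) (r i)) :
    ∀ e : Fin n, ¬ IsBridge (fun i : Fin n => a i.1) (fun i : Fin n => b i.1) e := by
  intro e he
  have hflow : ∑ i : Fin n, (Pi.single (b i) (r i) - Pi.single (a i) (r i) : Fin d → ℤ) = 0 := by
    rw [← Fin.sum_univ_cyclic_sub_eq_zero n v]
    refine Finset.sum_congr rfl fun i _ => ?_
    rw [hv i i.isLt, hv' i i.isLt]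
    abel
  exact (hr e e.isLt).ne'
    (he.eq_zero_of_sum_single_sub_single_eq_zero _ _ (fun i : Fin n => r i) hflow)

/-- for every closed walk `v 0, F 0, v 1, F 1, …, F (n-1), v 0` in the
`d`-uniform hypergraph `C_d` on `ℤ^d` (hyperedges `{x + r • e₁, …, x + r • e_d}` for
`x ∈ ℤ^d` and `r > 0`; the hyperedge `F i` is recorded by its base point `x i` and
radius `r i`, with `v i = x i + r i • e_{a i}` and `v (i+1) = x i + r i • e_{b i}`,
so `a i` and `b i` are the labels `λ_{F i} (v i)` and `λ_{F i} (v (i+1))`),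
the projection multigraph on `{1, …, d}` with edge multiset
`{a i — b i : 0 ≤ i < n}` is bridgeless. -/
theorem stmt_1 (d n : ℕ) (hd : 2 ≤ d) (hn : 0 < n)
    (v x : ℕ → Fin d → ℤ) (r : ℕ → ℤ) (a b : ℕ → Fin d)
    (hr : ∀ i < n, 0 < r i)
    (hv : ∀ i < n, v i = x i + Pi.single (a i) (r i))
    (hv' : ∀ i < n, v ((i + 1) % n) = x i + Pi.single (b i) (r i))
    (hFne : ∀ i < n,
      ({w | ∃ j : Fin d, w = x i + Pi.single j (r i)} : Set (Fin d → ℤ)) ≠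
      {w | ∃ j : Fin d, w = x ((i + 1) % n) + Pi.single j (r ((i + 1) % n))})
    (hdist : ∀ i j, 1 ≤ i → i < j → j < n → v i ≠ v j) :
    ∀ e : Fin n, ¬ IsBridge (fun i : Fin n => a i.1) (fun i : Fin n => b i.1) e :=
  stmt_1_general d n v x r a b hr hv hv'
end

section
/- The hypergraph C_d on vertex set Z^d, whose hyperedges are the sets {x + r e_1, ..., x + r e_d} for x in Z^d and positive integers r, has unbounded chromatic number: for every k there is no proper k-colouring of C_d, i.e., every colouring of Z^d with k colours yields a monochromatic hyperedge of C_d. -/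
/-- for `d ≥ 2`, the hypergraph `C_d` on `ℤ^d`, with hyperedges
`{x + r • e₁, …, x + r • e_d}` for `x ∈ ℤ^d` and `r > 0`, has unbounded chromatic
number: every colouring of `ℤ^d` with `k` colours yields a monochromatic hyperedge. -/
theorem stmt_5 (d k : ℕ) (hd : 2 ≤ d) (c : (Fin d → ℤ) → Fin k) :
    ∃ (x : Fin d → ℤ) (r : ℤ), 0 < r ∧
      ∀ i j : Fin d, c (x + Pi.single i r) = c (x + Pi.single j r) := by
  obtain ⟨a, ha, b, c0, h⟩ := Combinatorics.exists_mono_homothetic_copy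
    (Finset.image (fun i : Fin d => Pi.single i (1 : ℤ)) Finset.univ) c
  refine ⟨b, (a : ℤ), by exact_mod_cast ha, fun i j => ?_⟩
  have key : ∀ i : Fin d, c (b + Pi.single i (a : ℤ)) = c0 := by
    intro i
    have := h (Pi.single i (1 : ℤ)) (Finset.mem_image_of_mem _ (Finset.mem_univ i))
    rw [← this]
    congr 1
    rw [add_comm]
    congr 1
    ext x
    by_cases hx : x = i <;> simp [hx, Pi.single_apply]
  rw [key i, key j]
end

section
/- For each integer d \ge 2, the hypergraph C_d is tranquil, witnessed by the labellings \lambda_F(x + r e_i) = i for each hyperedge F = {x + r e_1, ..., x + r e_d}. -/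
/-!
Walking along the hyperedge `F i = {x i + r i • e_j}` from `v i` to `v (i + 1)` moves by
`r i • (e_{b i} - e_{a i})`, and a closed walk returns to its start, so the weights `r i` form a
circulation on the projection multigraph with edges `a i — b i`. A cut through a bridge would
carry a nonzero net flow, namely its weight; hence an edge of positive weight is never a bridge.
-/

open Finset

section Multigraph

variable {V E : Type*} (efst esnd : E → V)

theorem not_isBridge_of_eqvGen_compl {e : E}
    (h : Relation.EqvGen (MStep efst esnd {e}ᶜ) (efst e) (esnd e)) : ¬ IsBridge efst esnd e := by
  have hsetoid : Relation.EqvGen.setoid (MStep efst esnd Set.univ) =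
      Relation.EqvGen.setoid (MStep efst esnd {e}ᶜ) := by
    refine le_antisymm (Setoid.eqvGen_le ?_)
      (Setoid.eqvGen_mono fun x y ⟨i, _, hi⟩ => ⟨i, trivial, hi⟩)
    rintro x y ⟨i, -, hi⟩
    by_cases hie : i = e
    · subst hie
      rcases hi with ⟨rfl, rfl⟩ | ⟨rfl, rfl⟩
      exacts [h, h.symm _ _]
    · exact .rel _ _ ⟨i, hie, hi⟩
  rw [IsBridge, numComponents, numComponents, hsetoid]
  exact lt_irrefl _

def IsCirculation [Fintype E] [DecidableEq V] {M : Type*} [AddCommGroup M] (w : E → M) : Prop :=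
  ∑ i, (Pi.single (esnd i) (w i) - Pi.single (efst i) (w i) : V → M) = 0

variable {efst esnd}

theorem IsCirculation.eqvGen_compl [Fintype E] [Fintype V] [DecidableEq V] {M : Type*}
    [AddCommGroup M] {w : E → M} (hw : IsCirculation efst esnd w) {e : E} (he : w e ≠ 0) :
    Relation.EqvGen (MStep efst esnd {e}ᶜ) (efst e) (esnd e) := by
  classical
  by_contra hne
  set S : Finset V := {j | Relation.EqvGen (MStep efst esnd {e}ᶜ) (efst e) j}
  have hflux : ∀ i, ∑ j ∈ S, (Pi.single (esnd i) (w i) - Pi.single (efst i) (w i) : V → M) j =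
      (if esnd i ∈ S then w i else 0) - (if efst i ∈ S then w i else 0) := by
    intro i
    simp only [Pi.sub_apply, sum_sub_distrib, sum_pi_single']
  have hcut : ∀ i ≠ e, (esnd i ∈ S ↔ efst i ∈ S) := by
    intro i hi
    have hstep : Relation.EqvGen (MStep efst esnd {e}ᶜ) (efst i) (esnd i) :=
      .rel _ _ ⟨i, hi, .inl ⟨rfl, rfl⟩⟩
    simp only [S, mem_filter, mem_univ, true_and]
    exact ⟨fun h => h.trans _ _ _ (hstep.symm _ _), fun h => h.trans _ _ _ hstep⟩
  have hnet := congrArg (fun f => ∑ j ∈ S, f j) hw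
  simp only [Finset.sum_apply, Pi.zero_apply, sum_const_zero] at hnet
  rw [sum_comm, sum_eq_single e (fun i _ hi => by rw [hflux, if_congr (hcut i hi) rfl rfl, sub_self])
    (by simp), hflux] at hnet
  have hfst : efst e ∈ S := by simpa [S] using Relation.EqvGen.refl _
  have hsnd : esnd e ∉ S := by simpa [S] using hne
  simp only [hsnd, hfst, if_false, if_true, zero_sub, neg_eq_zero] at hnet
  exact he hnet

theorem IsCirculation.not_isBridge [Fintype E] [Fintype V] [DecidableEq V] {M : Type*}
    [AddCommGroup M] {w : E → M} (hw : IsCirculation efst esnd w) {e : E} (he : w e ≠ 0) :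
    ¬ IsBridge efst esnd e :=
  not_isBridge_of_eqvGen_compl efst esnd (hw.eqvGen_compl he)

end Multigraph

theorem Finset.sum_range_sub_cyclic {G : Type*} [AddCommGroup G] (f : ℕ → G) {n : ℕ}
    (hn : 0 < n) : ∑ i ∈ range n, (f ((i + 1) % n) - f i) = 0 := by
  obtain ⟨m, rfl⟩ := Nat.exists_eq_add_of_lt hn
  rw [zero_add, sum_range_succ, Nat.mod_self,
    sum_congr rfl fun i hi => by rw [Nat.mod_eq_of_lt (by simpa using hi)], sum_range_sub]
  abel

theorem stmt_8_general (d : ℕ) :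
    ∀ (ℓ : ℕ), 0 < ℓ →
      ∀ (v x : ℕ → Fin d → ℤ) (r : ℕ → ℤ) (a b : ℕ → Fin d),
        (∀ i < ℓ, 0 < r i) →
        (∀ i < ℓ, v i = x i + Pi.single (a i) (r i)) →
        (∀ i < ℓ, v ((i + 1) % ℓ) = x i + Pi.single (b i) (r i)) →
        (∀ i < ℓ,
          ({w | ∃ j : Fin d, w = x i + Pi.single j (r i)} : Set (Fin d → ℤ)) ≠
          {w | ∃ j : Fin d, w = x ((i + 1) % ℓ) + Pi.single j (r ((i + 1) % ℓ))}) →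
        (∀ i j, 1 ≤ i → i < j → j < ℓ → v i ≠ v j) →
        ∀ e : Fin ℓ,
          ¬ IsBridge (fun i : Fin ℓ => a i.1) (fun i : Fin ℓ => b i.1) e := by
  intro ℓ hℓ v x r a b hr hva hvb _ _ e
  have hcirc : IsCirculation (fun i : Fin ℓ => a i.1) (fun i : Fin ℓ => b i.1) (fun i => r i) :=
    calc ∑ i : Fin ℓ, (Pi.single (b i) (r i) - Pi.single (a i) (r i) : Fin d → ℤ)
        = ∑ i ∈ range ℓ, (v ((i + 1) % ℓ) - v i) := by
          refine (Fin.sum_univ_eq_sum_range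
            (fun i => (Pi.single (b i) (r i) - Pi.single (a i) (r i) : Fin d → ℤ)) ℓ).trans
            (sum_congr rfl fun i hi => ?_)
          rw [hva i (mem_range.1 hi), hvb i (mem_range.1 hi), add_sub_add_left_eq_sub]
      _ = 0 := sum_range_sub_cyclic v hℓ
  exact hcirc.not_isBridge (hr e e.2).ne'

/-- for `d ≥ 2`, the hypergraph `C_d` is tranquil, witnessed by the
labellings `λ_F (x + r • e_i) = i` for each hyperedge `F = {x + r • e₁, …, x + r • e_d}`:
for every closed walk `v 0, F 0, v 1, F 1, …, F (ℓ-1), v 0` (where `F i` has base point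
`x i` and radius `r i > 0`, and `a i, b i` are the labels of `v i` and `v (i+1)` in
`F i`), the projection multigraph on `{1, …, d}` with edge multiset
`{a i — b i : 0 ≤ i < ℓ}` is bridgeless. -/
theorem stmt_8 (d : ℕ) (hd : 2 ≤ d) :
    ∀ (ℓ : ℕ), 0 < ℓ →
      ∀ (v x : ℕ → Fin d → ℤ) (r : ℕ → ℤ) (a b : ℕ → Fin d),
        (∀ i < ℓ, 0 < r i) →
        (∀ i < ℓ, v i = x i + Pi.single (a i) (r i)) →
        (∀ i < ℓ, v ((i + 1) % ℓ) = x i + Pi.single (b i) (r i)) →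
        (∀ i < ℓ,
          ({w | ∃ j : Fin d, w = x i + Pi.single j (r i)} : Set (Fin d → ℤ)) ≠
          {w | ∃ j : Fin d, w = x ((i + 1) % ℓ) + Pi.single j (r ((i + 1) % ℓ))}) →
        (∀ i j, 1 ≤ i → i < j → j < ℓ → v i ≠ v j) →
        ∀ e : Fin ℓ,
          ¬ IsBridge (fun i : Fin ℓ => a i.1) (fun i : Fin ℓ => b i.1) e :=
  stmt_8_general d
end

section
/- Let G be a graph constructed from a hypergraph H with chromatic number at least k as follows: take a vertex set consisting of an independent set T in bijection \nu with V(H), together with one copy G_F of a graph G' for each hyperedge F of H, and for each hyperedge F add a perfect matching between \nu^{-1}(F) and the vertices of G_F. If \chi(G') \ge k - 1, then \chi(G) \ge k. -/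
/-- The hyper-Tutte construction: vertex set an "independent set" copy of `VH`
(the vertices of the hypergraph) together with one copy of `VG` for each hyperedge
index `i : ι`; inside each copy the graph `G'` is placed, and the copy for `i` is
joined to `VH` by the matching `u ↦ m i u`. -/
def hyperTutte {VH VG ι : Type*} (G' : SimpleGraph VG) (m : ι → VG → VH) :
    SimpleGraph (VH ⊕ ι × VG) :=
  SimpleGraph.fromRel (fun p q =>
    match p, q with
    | Sum.inr (i, u), Sum.inr (j, v) => i = j ∧ G'.Adj u v
    | Sum.inl w, Sum.inr (i, u) => m i u = w
    | _, _ => False)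

/-- if the hypergraph with hyperedges `edges i ⊆ VH` has chromatic
number at least `k` (no proper `(k-1)`-colouring), the graph `G'` has chromatic
number at least `k - 1` (no proper `(k-2)`-colouring), and each copy of `G'` is
joined to the corresponding hyperedge by a perfect matching `m i` (injective with
range `edges i`), then the hyper-Tutte graph has chromatic number at least `k`
(no proper `(k-1)`-colouring). -/
theorem stmt_10 {VH VG ι : Type} (k : ℕ)
    (edges : ι → Set VH) (G' : SimpleGraph VG) (m : ι → VG → VH)
    (hm_inj : ∀ i, Function.Injective (m i))
    (hm_range : ∀ i, Set.range (m i) = edges i)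
    (hH : ∀ c : VH → Fin (k - 1), ∃ i, ∀ v ∈ edges i, ∀ w ∈ edges i, c v = c w)
    (hG' : ∀ c : VG → Fin (k - 2), ∃ u v, G'.Adj u v ∧ c u = c v) :
    ∀ c : (VH ⊕ ι × VG) → Fin (k - 1),
      ∃ p q, (hyperTutte G' m).Adj p q ∧ c p = c q := by
  intro c
  -- VG is nonempty, else hG' is contradictory
  have hVG : Nonempty VG := by
    by_contra h
    rw [not_nonempty_iff] at h
    obtain ⟨u, -, -⟩ := hG' (fun v => isEmptyElim v)
    exact isEmptyElim u
  obtain ⟨u₀⟩ := hVG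
  obtain ⟨i, hi⟩ := hH (fun w => c (Sum.inl w))
  set a := c (Sum.inl (m i u₀)) with ha
  have hmem : ∀ u : VG, m i u ∈ edges i := fun u => (hm_range i) ▸ ⟨u, rfl⟩
  have hcol : ∀ u : VG, c (Sum.inl (m i u)) = a := fun u => hi _ (hmem u) _ (hmem u₀)
  by_cases hex : ∃ u : VG, c (Sum.inr (i, u)) = a
  · obtain ⟨u, hu⟩ := hex
    refine ⟨Sum.inl (m i u), Sum.inr (i, u), ?_, by rw [hcol u, hu]⟩
    exact ⟨by simp, Or.inl rfl⟩
  · push_neg at hex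
    have hk1 : 0 < k - 1 := a.pos
    have hklt : (a : ℕ) < k - 1 := a.isLt
    -- an injection from colours ≠ a into Fin (k-2)
    have hgv : ∀ x : Fin (k - 1), x ≠ a →
        (if (x : ℕ) < (a : ℕ) then (x : ℕ) else (x : ℕ) - 1) < k - 2 := by
      intro x hx
      have hne : (x : ℕ) ≠ (a : ℕ) := fun h => hx (Fin.ext h)
      have := x.isLt
      split <;> omega
    have key : ∀ x y : Fin (k - 1), x ≠ a → y ≠ a →
        (if (x : ℕ) < (a : ℕ) then (x : ℕ) else (x : ℕ) - 1) =
        (if (y : ℕ) < (a : ℕ) then (y : ℕ) else (y : ℕ) - 1) → x = y := by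
      intro x y hx hy h
      have hnex : (x : ℕ) ≠ (a : ℕ) := fun h => hx (Fin.ext h)
      have hney : (y : ℕ) ≠ (a : ℕ) := fun h => hy (Fin.ext h)
      apply Fin.ext
      split at h <;> split at h <;> omega
    set d : VG → Fin (k - 2) := fun u =>
      ⟨if (c (Sum.inr (i, u)) : ℕ) < (a : ℕ) then (c (Sum.inr (i, u)) : ℕ)
        else (c (Sum.inr (i, u)) : ℕ) - 1, hgv _ (hex u)⟩ with hd
    obtain ⟨u, v, huv, hcuv⟩ := hG' d
    refine ⟨Sum.inr (i, u), Sum.inr (i, v), ?_, ?_⟩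
    · refine ⟨by simp [huv.ne], Or.inl ⟨rfl, huv⟩⟩
    · exact key _ _ (hex u) (hex v) (congrArg Fin.val hcuv)
end

section
/- Let G be a graph constructed from a hypergraph H of girth at least \lceil g/3 \rceil and graphs of girth at least g as follows: take an independent set T in bijection with V(H), and for each hyperedge F of H a disjoint copy of a graph G' of girth at least g, joined to the vertices of T corresponding to F by a perfect matching. Then G has girth at least g. -/
namespace SimpleGraph

variable {V : Type*} {G : SimpleGraph V} {n : ℕ} {d : ℕ → V}

/-- `d` runs around a cycle of length `n` of `G` periodically. -/
structure IsCyclicSeq (G : SimpleGraph V) (n : ℕ) (d : ℕ → V) : Prop where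
  adj : ∀ t, G.Adj (d t) (d (t + 1))
  eq_iff_modEq : ∀ s t, d s = d t ↔ s ≡ t [MOD n]

lemma IsCyclicSeq.periodic (hd : G.IsCyclicSeq n d) : Function.Periodic d n := fun t =>
  (hd.eq_iff_modEq _ _).mpr (Nat.add_mod_right t n)

lemma IsCyclicSeq.apply_ne_of_lt_of_lt_add (hd : G.IsCyclicSeq n d) {s t : ℕ} (hst : s < t)
    (hts : t < s + n) : d s ≠ d t := fun h =>
  hst.ne (((hd.eq_iff_modEq s t).mp h).eq_of_abs_lt (abs_sub_lt_iff.mpr ⟨by omega, by omega⟩))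

lemma Walk.IsCycle.exists_isCyclicSeq {a : V} {w : G.Walk a a} (hw : w.IsCycle) :
    ∃ d, G.IsCyclicSeq w.length d := by
  have hn := hw.three_le_length
  obtain ⟨f⟩ := (cycleGraph_isContained_iff (by omega)).mpr ⟨a, w, hw, rfl⟩
  have : NeZero w.length := ⟨by omega⟩
  refine ⟨fun t => f (Fin.ofNat _ t), fun t => f.toHom.map_adj ?_, fun s t => ?_⟩
  · have : Fin.ofNat w.length (t + 1) - Fin.ofNat w.length t = 1 := by
      rw [sub_eq_iff_eq_add']
      ext
      simp [Fin.val_add, Nat.add_mod]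
    rw [cycleGraph_adj', this, Fin.val_one', Nat.mod_eq_of_lt (by omega)]
    exact Or.inr rfl
  · rw [← f.coe_toHom, f.injective.eq_iff, Fin.ext_iff, Fin.val_ofNat, Fin.val_ofNat]
    rfl

lemma IsCyclicSeq.egirth_le (hd : G.IsCyclicSeq n d) (hn : 3 ≤ n) : G.egirth ≤ n := by
  have : NeZero n := ⟨by omega⟩
  have hsucc : ∀ u v : Fin n, (u - v).val = 1 → d u = d (v + 1) := by
    intro u v h
    rw [hd.eq_iff_modEq, ← sub_add_cancel u v, Fin.val_add, h, Nat.add_comm 1]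
    exact Nat.mod_modEq _ _
  have hcopy : cycleGraph n ⊑ G := by
    refine ⟨⟨⟨fun k => d k, fun {u v} huv => ?_⟩, fun u v huv => ?_⟩⟩
    · rcases cycleGraph_adj'.mp huv with h | h
      · simpa [hsucc u v h] using (hd.adj v).symm
      · simpa [hsucc v u h] using hd.adj u
    · exact Fin.ext (((hd.eq_iff_modEq _ _).mp huv).eq_of_lt_of_lt u.isLt v.isLt)
  obtain ⟨a, w, hw, hlen⟩ := (cycleGraph_isContained_iff hn).mp hcopy
  exact hlen ▸ egirth_le_length hw

end SimpleGraph

lemma Function.Periodic.exists_strictMono_enum {P : ℕ → Prop} [DecidablePred P] {n : ℕ}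
    (hP : Function.Periodic P n) (hn : 0 < n) (h : ∃ t, P t) :
    ∃ ℓ, ∃ τ : ℕ → ℕ, StrictMono τ ∧ (∀ j, P (τ j)) ∧
      (∀ j r, τ j < r → r < τ (j + 1) → ¬ P r) ∧ τ ℓ = τ 0 + n := by
  obtain ⟨t₀, ht₀⟩ := h
  have hinf : (Set.ofPred P).Infinite := Set.infinite_of_forall_exists_gt fun a =>
    ⟨t₀ + (a + 1) * n, by
      change P _
      rwa [← Nat.cast_id (a + 1), hP.nat_mul (a + 1) t₀], by nlinarith⟩
  refine ⟨Nat.count P (Nat.nth P 0 + n), Nat.nth P, Nat.nth_strictMono hinf,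
    Nat.nth_mem_of_infinite hinf, fun j r h1 h2 hr => (Nat.le_nth_of_lt_nth_succ h2 hr).not_gt h1,
    Nat.nth_count ?_⟩
  rw [hP]
  exact Nat.nth_mem_of_infinite hinf 0

lemma ZMod.apply_val_add_one {α : Type*} {ℓ : ℕ} [NeZero ℓ] {f : ℕ → α} (hf : f ℓ = f 0)
    (j : ZMod ℓ) : f (j + 1).val = f (j.val + 1) := by
  rw [ZMod.val_add, ZMod.val_one_eq_one_mod, Nat.add_mod_mod]
  rcases Nat.lt_or_ge (j.val + 1) ℓ with h | h
  · rw [Nat.mod_eq_of_lt h]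
  · rw [show j.val + 1 = ℓ by have := ZMod.val_lt j; omega, Nat.mod_self, hf]

section Berge

variable {ι VH : Type*} (edges : ι → Set VH)

def IsBergeCycle {ℓ : ℕ} (e : ZMod ℓ → ι) (x : ZMod ℓ → VH) : Prop :=
  Function.Injective e ∧ Function.Injective x ∧
    ∀ j : ZMod ℓ, x j ∈ edges (e j) ∧ x j ∈ edges (e (j + 1))

/-- A Berge cycle in which hyperedges may repeat, as long as consecutive ones differ. -/
structure IsBergeClosedWalk {ℓ : ℕ} (e : ZMod ℓ → ι) (x : ZMod ℓ → VH) : Prop where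
  injective : Function.Injective x
  ne_succ : ∀ j, e j ≠ e (j + 1)
  mem : ∀ j, x j ∈ edges (e j) ∧ x j ∈ edges (e (j + 1))

variable {edges} {ℓ : ℕ}

lemma IsBergeClosedWalk.two_le [NeZero ℓ] {e : ZMod ℓ → ι} {x : ZMod ℓ → VH}
    (h : IsBergeClosedWalk edges e x) : 2 ≤ ℓ := by
  by_contra! hℓ
  obtain rfl : ℓ = 1 := by have := NeZero.ne ℓ; omega
  exact h.ne_succ 0 (congrArg e (Subsingleton.elim _ _))

lemma isBergeClosedWalk_of_nat [NeZero ℓ] {E : ℕ → ι} {X : ℕ → VH} (hE : E ℓ = E 0)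
    (hX : Set.InjOn X (Set.Iio ℓ)) (hne : ∀ t < ℓ, E t ≠ E (t + 1))
    (hmem : ∀ t < ℓ, X t ∈ edges (E t) ∧ X t ∈ edges (E (t + 1))) :
    IsBergeClosedWalk edges (fun j : ZMod ℓ => E j.val) (fun j => X j.val) where
  injective j k h := ZMod.val_injective ℓ (hX (ZMod.val_lt j) (ZMod.val_lt k) h)
  ne_succ j := by simpa only [ZMod.apply_val_add_one hE] using hne _ (ZMod.val_lt j)
  mem j := by simpa only [ZMod.apply_val_add_one hE] using hmem _ (ZMod.val_lt j)

/-- Cutting at a repeated hyperedge `e a = e b` leaves the closed walk `a, a + 1, …, b - 1`. -/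
lemma IsBergeClosedWalk.exists_shorter [NeZero ℓ] {e : ZMod ℓ → ι} {x : ZMod ℓ → VH}
    (h : IsBergeClosedWalk edges e x) (he : ¬ Function.Injective e) :
    ∃ p, 0 < p ∧ p < ℓ ∧
      ∃ (e' : ZMod p → ι) (x' : ZMod p → VH), IsBergeClosedWalk edges e' x' := by
  obtain ⟨a, b, hab, hne⟩ : ∃ a b, e a = e b ∧ a ≠ b := by
    simpa [Function.Injective] using he
  set p := (b - a).val
  have hp : 0 < p := ZMod.val_pos.mpr (sub_ne_zero.mpr hne.symm)
  have hpℓ : p < ℓ := ZMod.val_lt _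
  have : NeZero p := NeZero.of_pos hp
  refine ⟨p, hp, hpℓ, _, _, isBergeClosedWalk_of_nat (E := fun t => e (a + t))
    (X := fun t => x (a + t)) ?_ ?_ ?_ ?_⟩
  · simp [p, hab]
  · intro s hs t ht hst
    have := (ZMod.natCast_eq_natCast_iff' s t ℓ).mp (add_left_cancel (h.injective hst))
    exact Nat.ModEq.eq_of_lt_of_lt this (hs.trans hpℓ) (ht.trans hpℓ)
  · intro t _
    simpa [add_assoc] using h.ne_succ (a + t)
  · intro t _
    simpa [add_assoc] using h.mem (a + t)

lemma IsBergeClosedWalk.exists_isBergeCycle [hℓ : NeZero ℓ] {e : ZMod ℓ → ι} {x : ZMod ℓ → VH}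
    (h : IsBergeClosedWalk edges e x) :
    ∃ p ≤ ℓ, 2 ≤ p ∧ ∃ (e' : ZMod p → ι) (x' : ZMod p → VH), IsBergeCycle edges e' x' := by
  induction ℓ using Nat.strong_induction_on generalizing hℓ with
  | _ ℓ ih =>
    by_cases he : Function.Injective e
    · exact ⟨ℓ, le_rfl, h.two_le, e, x, he, h.injective, h.mem⟩
    · obtain ⟨p, hp, hpℓ, e', x', h'⟩ := h.exists_shorter he
      have : NeZero p := NeZero.of_pos hp
      obtain ⟨q, hqp, hq, rest⟩ := ih p hpℓ h'
      exact ⟨q, hqp.trans hpℓ.le, hq, rest⟩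

end Berge

namespace hyperTutte

open SimpleGraph

variable {VH VG ι : Type*} {G' : SimpleGraph VG} {m : ι → VG → VH}

@[simp] lemma adj_inl_inl {x y : VH} : ¬ (hyperTutte G' m).Adj (.inl x) (.inl y) := by
  simp [hyperTutte]

@[simp] lemma adj_inl_inr {x : VH} {p : ι × VG} :
    (hyperTutte G' m).Adj (.inl x) (.inr p) ↔ m p.1 p.2 = x := by
  simp [hyperTutte]

@[simp] lemma adj_inr_inl {x : VH} {p : ι × VG} :
    (hyperTutte G' m).Adj (.inr p) (.inl x) ↔ m p.1 p.2 = x := by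
  simp [hyperTutte]

@[simp] lemma adj_inr_inr {p q : ι × VG} :
    (hyperTutte G' m).Adj (.inr p) (.inr q) ↔ p.1 = q.1 ∧ G'.Adj p.2 q.2 := by
  obtain ⟨i, u⟩ := p
  obtain ⟨j, v⟩ := q
  simp only [hyperTutte, fromRel_adj]
  constructor
  · rintro ⟨-, h | ⟨rfl, h⟩⟩
    exacts [h, ⟨rfl, h.symm⟩]
  · rintro ⟨rfl, h⟩
    exact ⟨by simp [h.ne], Or.inl ⟨rfl, h⟩⟩

variable {n : ℕ} {d : ℕ → VH ⊕ ι × VG}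

lemma exists_isCyclicSeq_of_forall_isRight (hd : (hyperTutte G' m).IsCyclicSeq n d)
    (h : ∀ t, (d t).isRight) : ∃ d', G'.IsCyclicSeq n d' := by
  choose p hp using fun t => Sum.isRight_iff.mp (h t)
  have hstep : ∀ t, (p t).1 = (p (t + 1)).1 ∧ G'.Adj (p t).2 (p (t + 1)).2 := fun t => by
    simpa [hp] using hd.adj t
  have hconst : ∀ t, (p t).1 = (p 0).1 := fun t => by
    induction t with
    | zero => rfl
    | succ t ih => rw [← (hstep t).1, ih]
  refine ⟨fun t => (p t).2, fun t => (hstep t).2, fun s t => ?_⟩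
  rw [← hd.eq_iff_modEq, hp, hp, Sum.inr.injEq, Prod.ext_iff, hconst s, hconst t]
  simp

lemma exists_eq_inr_add_of_forall_isRight (hadj : ∀ t, (hyperTutte G' m).Adj (d t) (d (t + 1)))
    {s : ℕ} {i : ι} {u : VG} (hs : d s = .inr (i, u)) (k : ℕ)
    (hrun : ∀ r, s < r → r ≤ s + k → (d r).isRight) : ∃ v, d (s + k) = .inr (i, v) := by
  induction k with
  | zero => exact ⟨u, hs⟩
  | succ k ih =>
    obtain ⟨v, hv⟩ := ih fun r h1 h2 => hrun r h1 (by omega)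
    obtain ⟨⟨j, w⟩, hw⟩ := Sum.isRight_iff.mp (hrun (s + k + 1) (by omega) le_rfl)
    have hij := hadj (s + k)
    simp only [hv, hw, adj_inr_inr] at hij
    exact ⟨w, by rw [← add_assoc, hw, hij.1]⟩

lemma exists_copy_between (hadj : ∀ t, (hyperTutte G' m).Adj (d t) (d (t + 1))) {s s' : ℕ}
    {x y : VH} (hs : d s = .inl x) (hs' : d s' = .inl y) (hlt : s < s')
    (hbetween : ∀ r, s < r → r < s' → (d r).isRight) :
    ∃ i u v, d (s + 1) = .inr (i, u) ∧ d (s' - 1) = .inr (i, v) ∧ m i u = x ∧ m i v = y := by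
  have h1 : s + 1 < s' := by
    refine lt_of_le_of_ne hlt fun h => ?_
    have := hadj s
    rw [h, hs, hs'] at this
    exact adj_inl_inl this
  obtain ⟨⟨i, u⟩, hu⟩ := Sum.isRight_iff.mp (hbetween (s + 1) (by omega) h1)
  obtain ⟨v, hv⟩ := exists_eq_inr_add_of_forall_isRight hadj hu (s' - 1 - (s + 1))
    fun r h1' h2 => hbetween r (by omega) (by omega)
  rw [show s + 1 + (s' - 1 - (s + 1)) = s' - 1 by omega] at hv
  have hx := hadj s
  rw [hs, hu, adj_inl_inr] at hx
  have hy := hadj (s' - 1)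
  rw [show s' - 1 + 1 = s' by omega, hv, hs', adj_inr_inl] at hy
  exact ⟨i, u, v, hu, hv, hx, hy⟩

lemma add_three_le_of_consecutive_inl (hd : (hyperTutte G' m).IsCyclicSeq n d) (hn : 3 ≤ n)
    {s s' : ℕ} {x y : VH} (hs : d s = .inl x) (hs' : d s' = .inl y) (hlt : s < s')
    (hbetween : ∀ r, s < r → r < s' → (d r).isRight) : s + 3 ≤ s' := by
  obtain ⟨i, u, v, hu, hv, hux, hvy⟩ := exists_copy_between hd.adj hs hs' hlt hbetween
  by_contra! h
  obtain rfl | rfl : s' = s + 1 ∨ s' = s + 2 := by omega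
  · exact Sum.inl_ne_inr (hs'.symm.trans hu)
  · rw [show s + 2 - 1 = s + 1 by omega, hu, Sum.inr.injEq, Prod.mk.injEq] at hv
    apply hd.apply_ne_of_lt_of_lt_add (s := s) (t := s + 2) (by omega) (by omega)
    rw [hs, hs', ← hux, ← hvy, hv.2]

lemma fst_ne_fst_of_inr_inl_inr (hm : ∀ i, Function.Injective (m i))
    (hd : (hyperTutte G' m).IsCyclicSeq n d) (hn : 3 ≤ n) {s : ℕ} {p q : ι × VG} {x : VH}
    (hp : d s = .inr p) (hx : d (s + 1) = .inl x) (hq : d (s + 2) = .inr q) : p.1 ≠ q.1 := by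
  intro h
  have hpx := hd.adj s
  rw [hp, hx, adj_inr_inl] at hpx
  have hqx := hd.adj (s + 1)
  rw [hx, hq, adj_inl_inr] at hqx
  have : p.2 = q.2 := hm p.1 (hpx.trans (h ▸ hqx.symm))
  apply hd.apply_ne_of_lt_of_lt_add (s := s) (t := s + 2) (by omega) (by omega)
  rw [hp, hq, Prod.ext h this]

lemma exists_strictMono_enum_isLeft (hd : (hyperTutte G' m).IsCyclicSeq n d) (hn : 3 ≤ n)
    (hhub : ∃ t, (d t).isLeft) :
    ∃ ℓ, 0 < ℓ ∧ 3 * ℓ ≤ n ∧ ∃ τ : ℕ → ℕ, StrictMono τ ∧ (∀ j, (d (τ j)).isLeft) ∧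
      (∀ j r, τ j < r → r < τ (j + 1) → (d r).isRight) ∧ τ ℓ = τ 0 + n := by
  obtain ⟨ℓ, τ, hτ, hhubτ, hgap, hτℓ⟩ :=
    Function.Periodic.exists_strictMono_enum (P := fun t => (d t).isLeft)
      (fun t => congrArg (fun v => v.isLeft = true) (hd.periodic t)) (by omega) hhub
  have hbetween j r (h1 : τ j < r) (h2 : r < τ (j + 1)) : (d r).isRight :=
    Sum.not_isLeft.mp (hgap j r h1 h2)
  have hspread : ∀ j, τ 0 + 3 * j ≤ τ j := by
    intro j
    induction j with
    | zero => simp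
    | succ j ih =>
      obtain ⟨x, hx⟩ := Sum.isLeft_iff.mp (hhubτ j)
      obtain ⟨y, hy⟩ := Sum.isLeft_iff.mp (hhubτ (j + 1))
      have := add_three_le_of_consecutive_inl hd hn hx hy (hτ j.lt_add_one) (hbetween j)
      omega
  have hℓ : 0 < ℓ := Nat.pos_of_ne_zero fun h => by rw [h] at hτℓ; omega
  exact ⟨ℓ, hℓ, by have := hspread ℓ; omega, τ, hτ, hhubτ, hbetween, hτℓ⟩

lemma exists_isBergeClosedWalk (hm : ∀ i, Function.Injective (m i))
    (hd : (hyperTutte G' m).IsCyclicSeq n d) (hn : 3 ≤ n) (hhub : ∃ t, (d t).isLeft) :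
    ∃ ℓ, 0 < ℓ ∧ 3 * ℓ ≤ n ∧ ∃ (e : ZMod ℓ → ι) (x : ZMod ℓ → VH),
      IsBergeClosedWalk (fun i => Set.range (m i)) e x := by
  obtain ⟨ℓ, hℓ, hℓn, τ, hτ, hhubτ, hbetween, hτℓ⟩ := exists_strictMono_enum_isLeft hd hn hhub
  have : NeZero ℓ := NeZero.of_pos hℓ
  choose X hX using fun j => Sum.isLeft_iff.mp (hhubτ j)
  -- the `j`-th hyperedge is the copy traversed from the hub at `τ j` to the hub at `τ (j + 1)`
  choose E U V hU hV hmU hmV using fun j =>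
    exists_copy_between hd.adj (hX j) (hX (j + 1)) (hτ j.lt_add_one) (hbetween j)
  refine ⟨ℓ, hℓ, hℓn, _, _,
    isBergeClosedWalk_of_nat (E := E) (X := fun j => X (j + 1)) ?_ ?_ ?_ ?_⟩
  · have := hU ℓ
    rw [hτℓ, add_right_comm, hd.periodic, hU 0, Sum.inr.injEq, Prod.mk.injEq] at this
    exact this.1.symm
  · intro a ha b hb hab
    by_contra hne
    wlog hlt : a < b generalizing a b
    · exact this hb ha hab.symm (Ne.symm hne) (by omega)
    have hab' := hτ (show a + 1 < b + 1 by omega)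
    have hbℓ := hτ.monotone (show b + 1 ≤ ℓ by simpa using hb)
    have h0a := hτ (show 0 < a + 1 by omega)
    apply hd.apply_ne_of_lt_of_lt_add hab' (by omega)
    rw [hX, hX]
    exact congrArg Sum.inl hab
  · intro t _
    have h1 : 1 ≤ τ (t + 1) := (Nat.zero_le _).trans_lt (hτ t.lt_add_one)
    refine fst_ne_fst_of_inr_inl_inr hm hd hn (s := τ (t + 1) - 1) (q := (E (t + 1), U (t + 1)))
      (x := X (t + 1)) (hV t) ?_ ?_
    · rw [Nat.sub_add_cancel h1, hX]
    · rw [show τ (t + 1) - 1 + 2 = τ (t + 1) + 1 by omega, hU]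
  · intro t _
    exact ⟨⟨V t, hmV t⟩, ⟨U (t + 1), hmU (t + 1)⟩⟩

end hyperTutte

/-- if the hypergraph with hyperedges `edges i` has (Berge) girth at
least `⌈g/3⌉` (no Berge cycle on `2 ≤ ℓ < ⌈g/3⌉` distinct hyperedges and distinct
vertices), the graph `G'` has girth at least `g`, and each copy of `G'` is joined to
its hyperedge by a perfect matching, then the hyper-Tutte graph has girth at least
`g`. -/
theorem stmt_11 {VH VG ι : Type} (g : ℕ)
    (edges : ι → Set VH) (G' : SimpleGraph VG) (m : ι → VG → VH)
    (hm_inj : ∀ i, Function.Injective (m i))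
    (hm_range : ∀ i, Set.range (m i) = edges i)
    (hG'girth : (g : ℕ∞) ≤ G'.egirth)
    (hHgirth : ∀ ℓ : ℕ, 2 ≤ ℓ → ℓ < (g + 2) / 3 →
      ¬ ∃ (e : ZMod ℓ → ι) (x : ZMod ℓ → VH),
          Function.Injective e ∧ Function.Injective x ∧
          ∀ j : ZMod ℓ, x j ∈ edges (e j) ∧ x j ∈ edges (e (j + 1))) :
    (g : ℕ∞) ≤ (hyperTutte G' m).egirth := by
  rw [SimpleGraph.le_egirth]
  intro a w hw
  have hn := hw.three_le_length
  obtain ⟨d, hd⟩ := hw.exists_isCyclicSeq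
  by_cases hhub : ∃ t, (d t).isLeft
  · obtain ⟨ℓ, hℓ, hℓn, e, x, hex⟩ := hyperTutte.exists_isBergeClosedWalk hm_inj hd hn hhub
    have : NeZero ℓ := NeZero.of_pos hℓ
    rw [show (fun i => Set.range (m i)) = edges from funext hm_range] at hex
    obtain ⟨p, hpℓ, hp, e', x', hcyc⟩ := hex.exists_isBergeCycle
    have : (g + 2) / 3 ≤ p := by
      by_contra! h
      exact hHgirth p hp h ⟨e', x', hcyc⟩
    exact_mod_cast (by omega : g ≤ w.length)
  · obtain ⟨d', hd'⟩ := hyperTutte.exists_isCyclicSeq_of_forall_isRight hd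
      fun t => Sum.not_isLeft.mp fun h => hhub ⟨t, h⟩
    exact hG'girth.trans (hd'.egirth_le hn)
end

section
/- Every minimal Cayley graph is a no-lonely-colour graph: if S is a minimal generating set of a group \Gamma, then the Cayley graph Cay(\Gamma, S) admits an edge-colouring (colouring each edge {a, b} by the generator s \in S with b = sa or a = sb) such that every vertex is incident to at most two edges of any colour and each cycle contains no colour exactly once. -/
/-- The (undirected) Cayley graph of a group `Γ` with connection set `S`:
`a` and `b` are adjacent whenever `a ≠ b` and `a * b⁻¹ ∈ S` or `b * a⁻¹ ∈ S`. -/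
def cayleyGraph {Γ : Type*} [Group Γ] (S : Set Γ) : SimpleGraph Γ :=
  SimpleGraph.fromRel (fun a b => a * b⁻¹ ∈ S)

noncomputable def myLO (Γ : Type) : LinearOrder Γ :=
  IsWellOrder.linearOrder WellOrderingRel

open Classical in
noncomputable def kap {Γ : Type} [Group Γ] (S : Set Γ) (a b : Γ) : Γ :=
  letI := myLO Γ
  if a * b⁻¹ ∈ S ∧ b * a⁻¹ ∉ S then a * b⁻¹
  else if b * a⁻¹ ∈ S ∧ a * b⁻¹ ∉ S then b * a⁻¹
  else min (a * b⁻¹) (b * a⁻¹)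

lemma kap_symm {Γ : Type} [Group Γ] (S : Set Γ) (a b : Γ) :
    kap S a b = kap S b a := by
  classical
  letI := myLO Γ
  unfold kap
  by_cases h1 : a * b⁻¹ ∈ S <;> by_cases h2 : b * a⁻¹ ∈ S <;>
    simp [h1, h2, min_comm]

lemma kap_cases {Γ : Type} [Group Γ] (S : Set Γ) (a b : Γ) :
    kap S a b = a * b⁻¹ ∨ kap S a b = b * a⁻¹ := by
  classical
  letI := myLO Γ
  unfold kap
  split_ifs
  · exact Or.inl rfl
  · exact Or.inr rfl
  · rcases min_choice (a * b⁻¹) (b * a⁻¹) with h | h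
    · exact Or.inl h
    · exact Or.inr h

lemma kap_mem {Γ : Type} [Group Γ] (S : Set Γ) (a b : Γ)
    (h : a * b⁻¹ ∈ S ∨ b * a⁻¹ ∈ S) : kap S a b ∈ S := by
  classical
  letI := myLO Γ
  unfold kap
  split_ifs with h1 h2
  · exact h1.1
  · exact h2.1
  · push_neg at h1 h2
    rcases h with h | h
    · have hb : b * a⁻¹ ∈ S := h1 h
      rcases min_choice (a * b⁻¹) (b * a⁻¹) with hm | hm <;> rw [hm] <;> assumption
    · have ha : a * b⁻¹ ∈ S := h2 h
      rcases min_choice (a * b⁻¹) (b * a⁻¹) with hm | hm <;> rw [hm] <;> assumption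

lemma kap_rel {Γ : Type} [Group Γ] (S : Set Γ) (a b : Γ) :
    b = kap S a b * a ∨ a = kap S a b * b := by
  rcases kap_cases S a b with h | h
  · right; rw [h]; group
  · left; rw [h]; group

/-- every minimal Cayley graph is a no-lonely-colour graph: if `S` is a
minimal generating set of `Γ`, then `Cay(Γ, S)` has an edge-colouring `κ` (colouring
each edge `{a, b}` by a generator `s ∈ S` with `b = s * a` or `a = s * b`) such that
every vertex is incident with at most two edges of any colour and every cycle
contains no colour exactly once. -/
theorem stmt_15 {Γ : Type} [Group Γ] (S : Set Γ)
    (hgen : Subgroup.closure S = ⊤)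
    (hmin : ∀ s ∈ S, Subgroup.closure (S \ {s}) ≠ ⊤) :
    ∃ κ : Γ → Γ → Γ,
      (∀ a b, κ a b = κ b a) ∧
      (∀ a b, (cayleyGraph S).Adj a b →
        κ a b ∈ S ∧ (b = κ a b * a ∨ a = κ a b * b)) ∧
      (∀ (a s : Γ), ∃ b₁ b₂ : Γ, ∀ b, (cayleyGraph S).Adj a b → κ a b = s →
        b = b₁ ∨ b = b₂) ∧
      (∀ (n : ℕ) (c : ZMod n → Γ), 3 ≤ n → Function.Injective c →
        (∀ j : ZMod n, (cayleyGraph S).Adj (c j) (c (j + 1))) →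
        ∀ j : ZMod n, ∃ j', j' ≠ j ∧
          κ (c j') (c (j' + 1)) = κ (c j) (c (j + 1))) := by
  classical
  refine ⟨kap S, kap_symm S, ?_, ?_, ?_⟩
  · intro a b hab
    have hmem : a * b⁻¹ ∈ S ∨ b * a⁻¹ ∈ S := by
      simpa [cayleyGraph, SimpleGraph.fromRel_adj] using hab.2
    exact ⟨kap_mem S a b hmem, kap_rel S a b⟩
  · intro a s
    refine ⟨s⁻¹ * a, s * a, fun b _ hk => ?_⟩
    rcases kap_cases S a b with h | h
    · left; rw [h] at hk; rw [← hk]; group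
    · right; rw [h] at hk; rw [← hk]; group
  · intro n c hn _ hadj j
    by_contra hcon
    push_neg at hcon
    set s := kap S (c j) (c (j + 1)) with hs
    have hadjmem : ∀ i : ZMod n, c i * (c (i+1))⁻¹ ∈ S ∨ c (i+1) * (c i)⁻¹ ∈ S := by
      intro i
      simpa [cayleyGraph, SimpleGraph.fromRel_adj] using (hadj i).2
    have hsS : s ∈ S := kap_mem S _ _ (hadjmem j)
    set H := Subgroup.closure (S \ {s}) with hH
    have step : ∀ i : ZMod n, i ≠ j → c (i + 1) * (c i)⁻¹ ∈ H := by
      intro i hij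
      have ht : kap S (c i) (c (i+1)) ∈ S := kap_mem S _ _ (hadjmem i)
      have htne : kap S (c i) (c (i+1)) ≠ s := hcon i hij
      have htH : kap S (c i) (c (i+1)) ∈ H :=
        Subgroup.subset_closure ⟨ht, htne⟩
      rcases kap_rel S (c i) (c (i+1)) with h | h
      · have h1 : c (i+1) * (c i)⁻¹ = kap S (c i) (c (i+1)) :=
          mul_inv_eq_iff_eq_mul.mpr h
        rw [h1]; exact htH
      · have h1 : c i * (c (i+1))⁻¹ = kap S (c i) (c (i+1)) :=
          mul_inv_eq_iff_eq_mul.mpr h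
        have h2 : c (i+1) * (c i)⁻¹ = (kap S (c i) (c (i+1)))⁻¹ := by
          rw [← h1]; group
        rw [h2]; exact inv_mem htH
    haveI : NeZero n := ⟨by omega⟩
    have chain : ∀ k : ℕ, k ≤ n - 1 →
        c (j + 1 + (k : ZMod n)) * (c (j + 1))⁻¹ ∈ H := by
      intro k
      induction k with
      | zero => intro _; simpa using one_mem H
      | succ k ih =>
        intro hk
        have ih' := ih (by omega)
        have hne : j + 1 + (k : ZMod n) ≠ j := by
          intro he
          have he' : j + (1 + (k : ZMod n)) = j + 0 := by
            rw [← add_assoc]; simpa using he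
          have h0 : (1 + (k : ZMod n)) = 0 := add_left_cancel he'
          have h0' : ((k + 1 : ℕ) : ZMod n) = 0 := by push_cast; rw [add_comm]; exact h0
          have hdvd := (ZMod.natCast_eq_zero_iff (k+1) n).mp h0'
          have := Nat.le_of_dvd (by omega) hdvd
          omega
        have hstep := step _ hne
        have key : c (j + 1 + ((k+1 : ℕ) : ZMod n)) * (c (j + 1))⁻¹ =
            (c (j + 1 + (k : ZMod n) + 1) * (c (j + 1 + (k : ZMod n)))⁻¹) *
            (c (j + 1 + (k : ZMod n)) * (c (j + 1))⁻¹) := by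
          push_cast
          group
        rw [key]
        exact mul_mem hstep ih'
    have hlast : c j * (c (j + 1))⁻¹ ∈ H := by
      have h1 := chain (n - 1) le_rfl
      have h2 : j + 1 + ((n - 1 : ℕ) : ZMod n) = j := by
        have : ((n - 1 : ℕ) : ZMod n) = -1 := by
          have : ((n : ℕ) : ZMod n) = 0 := ZMod.natCast_self n
          push_cast [Nat.cast_sub (by omega : 1 ≤ n)]
          rw [this]; ring
        rw [this]; ring
      rwa [h2] at h1
    have hsH : s ∈ H := by
      rcases kap_rel S (c j) (c (j+1)) with h | h
      · rw [← hs] at h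
        have h1 : c (j+1) * (c j)⁻¹ = s := mul_inv_eq_iff_eq_mul.mpr h
        have h2 : c j * (c (j+1))⁻¹ = s⁻¹ := by rw [← h1]; group
        rw [h2] at hlast
        exact (inv_mem_iff).mp hlast
      · rw [← hs] at h
        have h1 : c j * (c (j+1))⁻¹ = s := mul_inv_eq_iff_eq_mul.mpr h
        rwa [h1] at hlast
    have hSH : S ⊆ H := by
      intro x hx
      by_cases hxs : x = s
      · rwa [hxs]
      · exact Subgroup.subset_closure ⟨hx, hxs⟩
    have : H = ⊤ := by
      rw [eq_top_iff, ← hgen]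
      exact Subgroup.closure_le H |>.mpr hSH
    exact hmin s hsS this
end
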